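/- arXiv:1902.08417 — 3 statements merged into one kernel-verified Lean document; each statement's English description precedes it below -/
import Mathlib

section
/- Let α, β > 0 and p ≥ 1. If there exists a constant C > 0 such that for every positive integer k and every x > 0 one has (αx + 1)^{−(pk + pn/2)} ≤ C · (pβx + 1)^{−(pk+n)/2}, then 2α ≥ pβ. -/
/-! After clearing denominators the hypothesis says that `((pβx + 1)^{1/2} / (αx + 1))^{pk}` stays
bounded as `k → ∞`, so `(pβx + 1)^{1/2} ≤ αx + 1` for every `x > 0`. Squaring gives
`pβ ≤ 2α + α²x`, and letting `x → 0` gives `pβ ≤ 2α`. -/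

open Real Filter

theorem le_of_forall_rpow_le_mul_rpow {a b p C : ℝ} (ha : 0 < a) (hp : 0 < p)
    (h : ∀ k : ℕ, 1 ≤ k → b ^ (p * k) ≤ C * a ^ (p * k)) : b ≤ a := by
  by_contra! hab
  have hb : 0 < b := ha.trans hab
  have hgrowth : Tendsto (fun k : ℕ => ((b / a) ^ p) ^ k) atTop atTop :=
    tendsto_pow_atTop_atTop_of_one_lt (one_lt_rpow ((one_lt_div ha).2 hab) hp)
  obtain ⟨k, hCk, hk⟩ := ((hgrowth.eventually_gt_atTop C).and (eventually_ge_atTop 1)).exists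
  have hpow : ((b / a) ^ p) ^ k = b ^ (p * k) / a ^ (p * k) := by
    rw [← rpow_natCast, ← rpow_mul (div_pos hb ha).le, div_rpow hb.le ha.le]
  rw [hpow, lt_div_iff₀ (rpow_pos_of_pos ha _)] at hCk
  exact (h k hk).not_gt hCk

theorem sqrt_rpow_le_mul_rpow_of_rpow_neg_le {a b C u v w : ℝ} (ha : 0 < a) (hb : 0 < b)
    (h : a ^ (-(u + v)) ≤ C * b ^ (-((u + w) / 2))) :
    √b ^ u ≤ C * a ^ v / √b ^ w * a ^ u := by
  have hsqrt : 0 < √b := sqrt_pos.2 hb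
  have hb_split : b ^ ((u + w) / 2) = √b ^ u * √b ^ w := by
    rw [sqrt_eq_rpow, ← rpow_mul hb.le, ← rpow_mul hb.le, ← rpow_add hb]
    ring_nf
  rw [rpow_neg ha.le, rpow_neg hb.le, rpow_add ha, hb_split,
    inv_le_iff_one_le_mul₀' (by positivity)] at h
  rw [div_mul_eq_mul_div, le_div_iff₀ (rpow_pos_of_pos hsqrt _)]
  field_simp at h
  linarith

theorem stmt6_general (n : ℕ) (α β p : ℝ) (hα : 0 < α) (hβ : 0 < β) (hp : 1 ≤ p)
    (h : ∃ C > (0 : ℝ), ∀ k : ℕ, 1 ≤ k → ∀ x : ℝ, 0 < x →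
      (α * x + 1) ^ (-(p * k + p * n / 2)) ≤ C * (p * β * x + 1) ^ (-((p * k + n) / 2))) :
    2 * α ≥ p * β := by
  obtain ⟨C, -, hC⟩ := h
  have hp0 : 0 < p := by linarith
  have hsqrt (x : ℝ) (hx : 0 < x) : √(p * β * x + 1) ≤ α * x + 1 :=
    le_of_forall_rpow_le_mul_rpow (by positivity) hp0 fun k hk =>
      sqrt_rpow_le_mul_rpow_of_rpow_neg_le (by positivity) (by positivity) (hC k hk x hx)
  refine le_of_forall_pos_le_add fun ε hε => ?_
  have hx : 0 < ε / α ^ 2 := by positivity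
  have hsq := (sqrt_le_left (by positivity)).1 (hsqrt _ hx)
  have hεx : α ^ 2 * (ε / α ^ 2) = ε := by field_simp
  nlinarith

/-- If there is `C > 0` with `(αx+1)^{−(pk+pn/2)} ≤ C (pβx+1)^{−(pk+n)/2}` for every
positive integer `k` and every `x > 0`, then `2α ≥ pβ`. -/
theorem stmt6 (n : ℕ) (hn : 2 ≤ n) (α β p : ℝ) (hα : 0 < α) (hβ : 0 < β) (hp : 1 ≤ p)
    (h : ∃ C > (0 : ℝ), ∀ k : ℕ, 1 ≤ k → ∀ x : ℝ, 0 < x →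
      (α * x + 1) ^ (-(p * k + p * n / 2)) ≤ C * (p * β * x + 1) ^ (-((p * k + n) / 2))) :
    2 * α ≥ p * β :=
  stmt6_general n α β p hα hβ hp h
end

section
/- Let β > 0 and n ≥ 2. Define C(n,β)² = sup over integers k, j ≥ 0 and 0 ≤ i ≤ min(k,j) with i ≡ k ≡ j (mod 2) of β^{i − (k+j)/2}·Γ(i + n/2)/Γ((k+j+n)/2). Then C(n,β)² ≤ 1 if β ≥ 1 or 1/β ≤ n/2, and C(n,β)² ≤ (2/(nβ))^{⌊1/β − n/2 + 1⌋ + 1} if 1/β > n/2. -/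
/-!
Writing `k + j = 2 (i + d)` (possible by the parity and `i ≤ min k j`) and `x = i + n/2`,
the recurrence `Γ(s + 1) = s Γ(s)` turns the quantity into `∏_{m < d} (β (x + m))⁻¹`.
Every factor is at most `2/(nβ)` since `x + m ≥ n/2`, and at most `1` as soon as
`β (x + m) ≥ 1`; the latter holds for every factor when `β ≥ 1` or `1/β ≤ n/2`, and otherwise
for all but the first `⌊1/β − n/2 + 1⌋ + 1` of them.
-/

open Real Finset

lemma Finset.prod_range_le_pow_of_le_one_of_le {R : Type*} [CommSemiring R] [PartialOrder R]
    [IsOrderedRing R] {f : ℕ → R} {c : R} {N : ℕ} (hc : 1 ≤ c) (h0 : ∀ m, 0 ≤ f m)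
    (hfc : ∀ m < N, f m ≤ c) (hf1 : ∀ m, N ≤ m → f m ≤ 1) (d : ℕ) :
    ∏ m ∈ range d, f m ≤ c ^ N := by
  rcases le_total d N with hdN | hNd
  · calc ∏ m ∈ range d, f m ≤ ∏ _m ∈ range d, c :=
          prod_le_prod (fun m _ => h0 m) fun m hm => hfc m ((mem_range.1 hm).trans_le hdN)
      _ = c ^ d := by rw [prod_const, card_range]
      _ ≤ c ^ N := pow_le_pow_right₀ hc hdN
  · rw [← prod_range_mul_prod_Ico f hNd]
    calc (∏ m ∈ range N, f m) * ∏ m ∈ Ico N d, f m ≤ (∏ _m ∈ range N, c) * 1 := by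
          refine mul_le_mul (prod_le_prod (fun m _ => h0 m) fun m hm => hfc m (mem_range.1 hm))
            (prod_le_one (fun m _ => h0 m) fun m hm => hf1 m (mem_Ico.1 hm).1)
            (prod_nonneg fun m _ => h0 m) (prod_nonneg fun _ _ => zero_le_one.trans hc)
      _ = c ^ N := by rw [mul_one, prod_const, card_range]

lemma Real.Gamma_add_nat {x : ℝ} (hx : 0 < x) (d : ℕ) :
    Gamma (x + d) = (∏ m ∈ range d, (x + m)) * Gamma x := by
  induction d with
  | zero => simp
  | succ d ih =>
    rw [Nat.cast_succ, ← add_assoc, Gamma_add_one (by positivity), ih, prod_range_succ]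
    ring

lemma rpow_neg_mul_Gamma_div_Gamma_add_nat {β x : ℝ} (hβ : 0 < β) (hx : 0 < x) (d : ℕ) :
    β ^ (-(d : ℝ)) * Gamma x / Gamma (x + d) = ∏ m ∈ range d, (β * (x + m))⁻¹ := by
  have hΓ : Gamma x ≠ 0 := (Gamma_pos_of_pos hx).ne'
  have hprod : ∏ m ∈ range d, (x + m) ≠ 0 := prod_ne_zero_iff.2 fun m _ => by positivity
  rw [rpow_neg hβ.le, rpow_natCast, Gamma_add_nat hx, prod_inv_distrib, prod_mul_distrib,
    prod_const, card_range]
  field_simp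

lemma prod_range_inv_mul_add_le_one {β x : ℝ} (hβ : 0 < β) (hβx : 1 ≤ β * x) (d : ℕ) :
    ∏ m ∈ range d, (β * (x + m))⁻¹ ≤ 1 := by
  have h1 (m : ℕ) : 1 ≤ β * (x + m) := by
    nlinarith [(Nat.cast_nonneg m : (0 : ℝ) ≤ m)]
  exact prod_le_one (fun m _ => inv_nonneg.2 (zero_le_one.trans (h1 m)))
    fun m _ => inv_le_one_of_one_le₀ (h1 m)

lemma prod_range_inv_mul_add_le_pow {β a x : ℝ} {N : ℕ} (hβ : 0 < β) (ha : 0 < a)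
    (hax : a ≤ x) (haβ : a * β ≤ 1) (hN : 1 ≤ β * (x + N)) (d : ℕ) :
    ∏ m ∈ range d, (β * (x + m))⁻¹ ≤ (a * β)⁻¹ ^ N := by
  have hlow (m : ℕ) : a * β ≤ β * (x + m) := by
    nlinarith [(Nat.cast_nonneg m : (0 : ℝ) ≤ m)]
  refine prod_range_le_pow_of_le_one_of_le ((one_le_inv₀ (by positivity)).2 haβ)
    (fun m => inv_nonneg.2 ((mul_pos ha hβ).le.trans (hlow m)))
    (fun m _ => inv_anti₀ (by positivity) (hlow m)) (fun m hm => inv_le_one_of_one_le₀ ?_) d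
  have : (N : ℝ) ≤ m := by exact_mod_cast hm
  nlinarith

lemma exists_nat_eq_floor_add_one {t : ℝ} (ht : 0 ≤ t) :
    ∃ N : ℕ, (N : ℤ) = ⌊t⌋ + 1 ∧ t < N := by
  refine ⟨(⌊t⌋ + 1).toNat, Int.toNat_of_nonneg (by positivity), ?_⟩
  rw [← Int.cast_natCast, Int.toNat_of_nonneg (by positivity), Int.cast_add, Int.cast_one]
  exact Int.lt_floor_add_one t

theorem stmt17_general (n : ℕ) (hn : 2 ≤ n) (β : ℝ) (hβ : 0 < β) (k j i : ℕ)
    (hik : i ≤ k) (hij : i ≤ j) (hmod2 : k % 2 = j % 2) :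
    ((1 ≤ β ∨ 1 / β ≤ (n : ℝ) / 2) →
      β ^ ((i : ℝ) - ((k : ℝ) + j) / 2) * Real.Gamma ((i : ℝ) + (n : ℝ) / 2) /
          Real.Gamma (((k : ℝ) + j + n) / 2) ≤ 1) ∧
    ((n : ℝ) / 2 < 1 / β →
      β ^ ((i : ℝ) - ((k : ℝ) + j) / 2) * Real.Gamma ((i : ℝ) + (n : ℝ) / 2) /
          Real.Gamma (((k : ℝ) + j + n) / 2) ≤
        (2 / (n * β)) ^ (⌊1 / β - (n : ℝ) / 2 + 1⌋ + 1)) := by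
  obtain ⟨d, hkj⟩ : ∃ d : ℕ, (k : ℝ) + j = 2 * (i + d) :=
    ⟨(k + j) / 2 - i, by exact_mod_cast (by omega : k + j = 2 * (i + ((k + j) / 2 - i)))⟩
  have hn2 : (1 : ℝ) ≤ n / 2 := by
    have : (2 : ℝ) ≤ n := by exact_mod_cast hn
    linarith
  have hx : (n : ℝ) / 2 ≤ i + n / 2 := le_add_of_nonneg_left i.cast_nonneg
  have hratio : β ^ ((i : ℝ) - ((k : ℝ) + j) / 2) * Gamma (i + n / 2) / Gamma ((k + j + n) / 2)
      = ∏ m ∈ range d, (β * ((i + n / 2 : ℝ) + m))⁻¹ := by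
    rw [← rpow_neg_mul_Gamma_div_Gamma_add_nat hβ (by positivity) d, hkj]
    ring_nf
  rw [hratio]
  refine ⟨fun h => prod_range_inv_mul_add_le_one hβ ?_ d, fun h => ?_⟩
  · rcases h with h | h
    · nlinarith
    · calc 1 = β * (1 / β) := by field_simp
        _ ≤ β * (i + n / 2) := by gcongr; linarith
  · obtain ⟨N, hN, hNt⟩ :=
      exists_nat_eq_floor_add_one (by linarith : (0 : ℝ) ≤ 1 / β - n / 2 + 1)
    rw [← hN, zpow_natCast, show 2 / (n * β) = (n / 2 * β)⁻¹ by field_simp]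
    refine prod_range_inv_mul_add_le_pow hβ (by positivity) hx ?_ ?_ d
    · exact ((lt_div_iff₀ hβ).1 h).le
    · calc 1 = β * (1 / β) := by field_simp
        _ ≤ β * (i + n / 2 + N) := by gcongr; linarith [(Nat.cast_nonneg i : (0 : ℝ) ≤ i)]

/-- Bound for `C(n,β)² = sup β^{i−(k+j)/2}Γ(i+n/2)/Γ((k+j+n)/2)` over `k, j ≥ 0`,
`0 ≤ i ≤ min(k,j)`, `i ≡ k ≡ j (mod 2)`: it is at most `1` if `β ≥ 1` or `1/β ≤ n/2`,
and at most `(2/(nβ))^{⌊1/β − n/2 + 1⌋ + 1}` if `1/β > n/2`. -/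
theorem stmt17 (n : ℕ) (hn : 2 ≤ n) (β : ℝ) (hβ : 0 < β) (k j i : ℕ)
    (hik : i ≤ k) (hij : i ≤ j) (hmod1 : i % 2 = k % 2) (hmod2 : k % 2 = j % 2) :
    ((1 ≤ β ∨ 1 / β ≤ (n : ℝ) / 2) →
      β ^ ((i : ℝ) - ((k : ℝ) + j) / 2) * Real.Gamma ((i : ℝ) + (n : ℝ) / 2) /
          Real.Gamma (((k : ℝ) + j + n) / 2) ≤ 1) ∧
    ((n : ℝ) / 2 < 1 / β →
      β ^ ((i : ℝ) - ((k : ℝ) + j) / 2) * Real.Gamma ((i : ℝ) + (n : ℝ) / 2) /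
          Real.Gamma (((k : ℝ) + j + n) / 2) ≤
        (2 / (n * β)) ^ (⌊1 / β - (n : ℝ) / 2 + 1⌋ + 1)) :=
  stmt17_general n hn β hβ k j i hik hij hmod2
end

section
/- Let n ≥ 2, β > 0, and let f be a polynomial on ℝⁿ with harmonic decomposition data a_s^k as in the paper: f = ∑_k p_k, p_k homogeneous of degree k, and on the sphere p_k = ∑_i ψ_k^i with ψ_k^i(x) = ∑_{|s|=i} a_s^k x^s harmonic homogeneous of degree i. Then ‖∑_{k} ∑_{i} ψ_k^i‖²_{L²(ℝⁿ, dμ_β)} = ∑_{k,j≥0} ∑_{i≥0} (β/2)^i ∑_{|s|=i} a_s^k \overline{a_s^j} s!. -/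
open Real MeasureTheory Finset

noncomputable section

/-- The Pochhammer symbol `(a)_m = a(a+1)⋯(a+m−1)`. -/
def poch (a : ℝ) (m : ℕ) : ℝ := ∏ i ∈ Finset.range m, (a + i)

/-- Kummer's confluent hypergeometric function `₁F₁(a, b; x)`. -/
def F11 (a b x : ℝ) : ℝ :=
  ∑' k : ℕ, poch a k * x ^ k / (poch b k * (Nat.factorial k : ℝ))

/-- The Gaussian probability measure `dμ_γ(y) = (πγ)^{−n/2} e^{−|y|²/γ} dy` on `ℝⁿ`. -/
def gaussMeasure (n : ℕ) (γ : ℝ) : Measure (EuclideanSpace ℝ (Fin n)) :=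
  volume.withDensity fun y =>
    ENNReal.ofReal ((Real.pi * γ) ^ (-(n : ℝ) / 2) * Real.exp (-‖y‖ ^ 2 / γ))

/-- The solid zonal harmonic `Y_m(x,y) = |y|^m 𝒴_m(x, y/|y|)`, given by the explicit
formula for zonal harmonics (with `Y_0 = 1`). -/
def zonal (n m : ℕ) (x y : EuclideanSpace ℝ (Fin n)) : ℝ :=
  if m = 0 then 1
  else
    ((n : ℝ) + 2 * m - 2) *
      ∑ k ∈ Finset.range (m / 2 + 1),
        (-1 : ℝ) ^ k * (∏ i ∈ Finset.range (m - k - 1), ((n : ℝ) + 2 * i)) /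
            (2 ^ k * (Nat.factorial k : ℝ) * (Nat.factorial (m - 2 * k) : ℝ)) *
          (inner ℝ x y : ℝ) ^ (m - 2 * k) * (‖x‖ ^ 2 * ‖y‖ ^ 2) ^ k

/-- The harmonic Fock reproducing kernel `H_α(x,y) = ∑ₖ Y_k(x,y)/(α^k (n/2)_k)`. -/
def Hker (n : ℕ) (α : ℝ) (x y : EuclideanSpace ℝ (Fin n)) : ℝ :=
  ∑' m : ℕ, zonal n m x y / (α ^ m * poch ((n : ℝ) / 2) m)

/-- `f : ℝⁿ → ℝ` is harmonic: smooth with vanishing Laplacian. -/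
def IsHarmonic {n : ℕ} (f : EuclideanSpace ℝ (Fin n) → ℝ) : Prop :=
  ContDiff ℝ ⊤ f ∧ ∀ x, ∑ i : Fin n,
    iteratedFDeriv ℝ 2 f x ![EuclideanSpace.single i 1, EuclideanSpace.single i 1] = 0

/-!
Integrating by parts against the one-dimensional Gaussian gives, for every polynomial `r`,
`∫ x_m r dμ_β = (β/2) ∫ ∂_m r dμ_β`. If `p` is harmonic and homogeneous of degree `i`, Euler's
identity `i p = ∑ x_m ∂_m p` turns this into `i ∫ p q dμ_β = (β/2) ∑_m ∫ ∂_m p ∂_m q dμ_β`, the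
term with `Δp` vanishing. The `∂_m p` are again harmonic and homogeneous, so induction on the degree
shows that harmonic homogeneous polynomials of different degrees are orthogonal in `L²(μ_β)`, and
that for equal degrees `i` the pairing is `(β/2)^i` times the Fischer pairing `∑_s a_s b_s s!`.
Expanding the square of `∑_k ∑_i ψ_k^i` gives the formula; since `a_s^k = 0` for `|s| > k`, the
inner sum may run up to `M` instead of `k`.
-/

open MvPolynomial

namespace Finsupp

variable {σ M : Type*} [Fintype σ] [DecidableEq σ] [CommMonoid M]

theorem prod_apply_add_single (g : ℕ → M) (u : σ →₀ ℕ) (m : σ) (k : ℕ) :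
    ∏ m', g ((u + single m k) m') = g (u m + k) * ∏ m' ∈ univ.erase m, g (u m') := by
  rw [← Finset.mul_prod_erase univ _ (mem_univ m)]
  congr 1
  · simp
  · exact Finset.prod_congr rfl fun m' hm' => by simp [(ne_of_mem_erase hm').symm]

theorem prod_apply_tsub_single (g : ℕ → M) (u : σ →₀ ℕ) (m : σ) (k : ℕ) :
    ∏ m', g ((u - single m k) m') = g (u m - k) * ∏ m' ∈ univ.erase m, g (u m') := by
  rw [← Finset.mul_prod_erase univ _ (mem_univ m)]
  congr 1
  · simp
  · exact Finset.prod_congr rfl fun m' hm' => by simp [(ne_of_mem_erase hm').symm]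

end Finsupp

namespace MvPolynomial

variable {σ K : Type*} [Field K]

theorem pderiv_comm (i j : σ) (p : MvPolynomial σ K) :
    pderiv i (pderiv j p) = pderiv j (pderiv i p) := by
  have h : ⁅pderiv i, pderiv j⁆ = (0 : Derivation K (MvPolynomial σ K) (MvPolynomial σ K)) :=
    derivation_ext fun k => by
      classical
      rw [Derivation.commutator_apply, pderiv_X, pderiv_X]
      simp [Pi.single_apply, apply_ite]
  simpa [Derivation.commutator_apply, sub_eq_zero] using congrArg (fun D => D p) h

theorem pderiv_eq_zero_of_isHomogeneous_zero {q : MvPolynomial σ K} (hq : q.IsHomogeneous 0)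
    (m : σ) : pderiv m q = 0 := by
  rw [← totalDegree_zero_iff_isHomogeneous, totalDegree_eq_zero_iff_eq_C] at hq
  rw [hq, pderiv_C]

variable [Fintype σ]

def laplacian (p : MvPolynomial σ K) : MvPolynomial σ K :=
  ∑ m, pderiv m (pderiv m p)

theorem laplacian_pderiv (i : σ) (p : MvPolynomial σ K) :
    laplacian (pderiv i p) = pderiv i (laplacian p) := by
  simp only [laplacian, map_sum, pderiv_comm i]

theorem IsHomogeneous.sum_apply_eq {p : MvPolynomial σ K} {i : ℕ} (hp : p.IsHomogeneous i)
    {u : σ →₀ ℕ} (hu : coeff u p ≠ 0) : ∑ m, u m = i := by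
  rw [← Finsupp.degree_eq_sum, Finsupp.degree_eq_weight_one]
  exact hp hu

def fischer (p q : MvPolynomial σ K) : K :=
  ∑ u ∈ p.support, coeff u p * coeff u q * ∏ m, ((u m).factorial : K)

theorem fischer_eq_sum_of_support_subset {p q : MvPolynomial σ K} {S : Finset (σ →₀ ℕ)}
    (hS : p.support ⊆ S) :
    fischer p q = ∑ u ∈ S, coeff u p * coeff u q * ∏ m, ((u m).factorial : K) :=
  sum_subset hS fun u _ hu => by rw [notMem_support_iff.1 hu, zero_mul, zero_mul]

theorem fischer_C_C (a b : K) : fischer (C a : MvPolynomial σ K) (C b) = a * b := by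
  rw [fischer_eq_sum_of_support_subset (p := C a) (S := {0}) support_monomial_subset]
  simp

section CharZero

variable [CharZero K]

theorem fischer_pderiv (m : σ) (p q : MvPolynomial σ K) :
    fischer (pderiv m p) (pderiv m q) =
      ∑ u ∈ p.support, (u m : K) * (coeff u p * coeff u q * ∏ m', ((u m').factorial : K)) := by
  classical
  set e : σ →₀ ℕ := Finsupp.single m 1
  have himage : (pderiv m p).support.image (· + e) ⊆ p.support := by
    simp only [subset_iff, mem_image, mem_support_iff, coeff_pderiv]
    rintro _ ⟨v, hv, rfl⟩
    exact left_ne_zero_of_mul hv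
  rw [fischer, ← sum_subset himage, sum_image fun _ _ _ _ => add_right_cancel]
  · refine sum_congr rfl fun v _ => ?_
    rw [coeff_pderiv, coeff_pderiv, Finsupp.prod_apply_add_single (fun k => (k.factorial : K)),
      ← mul_prod_erase univ (fun m' => ((v m').factorial : K)) (mem_univ m)]
    simp only [e, Finsupp.add_apply, Finsupp.single_eq_same]
    push_cast [Nat.factorial_succ]
    ring
  · intro u hu hnot
    by_cases hum : u m = 0
    · simp [hum]
    have hu' : u - e + e = u := tsub_add_cancel_of_le (Finsupp.single_le_iff.2 (by omega))
    refine absurd (mem_image.2 ⟨u - e, ?_, hu'⟩) hnot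
    rw [mem_support_iff, coeff_pderiv, hu']
    exact mul_ne_zero (mem_support_iff.1 hu) (Nat.cast_add_one_ne_zero _)

theorem sum_fischer_pderiv {p : MvPolynomial σ K} {i : ℕ} (hp : p.IsHomogeneous i)
    (q : MvPolynomial σ K) :
    ∑ m, fischer (pderiv m p) (pderiv m q) = i * fischer p q := by
  simp_rw [fischer_pderiv]
  rw [sum_comm, fischer, mul_sum]
  refine sum_congr rfl fun u hu => ?_
  rw [← sum_mul, ← Nat.cast_sum, hp.sum_apply_eq (mem_support_iff.1 hu)]

end CharZero

section GaussianRule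

variable {L : MvPolynomial σ K →ₗ[K] K} {c : K}

theorem natCast_mul_apply_mul_eq_sum_pderiv (hL : ∀ m r, L (X m * r) = c * L (pderiv m r))
    {p : MvPolynomial σ K} {i : ℕ} (hp : p.IsHomogeneous i) (hΔ : laplacian p = 0)
    (q : MvPolynomial σ K) :
    i * L (p * q) = c * ∑ m, L (pderiv m p * pderiv m q) := by
  have hsplit (m : σ) : L (pderiv m (pderiv m p * q)) =
      L (pderiv m (pderiv m p) * q) + L (pderiv m p * pderiv m q) := by
    rw [pderiv_mul, map_add]
  have hΔq : ∑ m, L (pderiv m (pderiv m p) * q) = 0 := by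
    rw [← map_sum, ← sum_mul, ← laplacian, hΔ, zero_mul, map_zero]
  calc (i : K) * L (p * q) = L ((i • p) * q) := by
        rw [smul_mul_assoc, map_nsmul, nsmul_eq_mul]
    _ = ∑ m, L (X m * (pderiv m p * q)) := by
      rw [← hp.sum_X_mul_pderiv, sum_mul, map_sum]
      simp only [mul_assoc]
    _ = c * ∑ m, L (pderiv m p * pderiv m q) := by
      simp only [hL, hsplit, ← mul_sum, sum_add_distrib, hΔq, zero_add]

variable [CharZero K]

theorem apply_mul_eq_zero_of_isHomogeneous_zero (hL : ∀ m r, L (X m * r) = c * L (pderiv m r))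
    {p q : MvPolynomial σ K} {i : ℕ} (hp : p.IsHomogeneous i) (hi : i ≠ 0)
    (hΔ : laplacian p = 0) (hq : q.IsHomogeneous 0) : L (p * q) = 0 := by
  have h := natCast_mul_apply_mul_eq_sum_pderiv hL hp hΔ q
  simp only [pderiv_eq_zero_of_isHomogeneous_zero hq, mul_zero, map_zero, sum_const_zero] at h
  exact (mul_eq_zero.1 h).resolve_left (Nat.cast_ne_zero.2 hi)

theorem apply_mul_of_isHomogeneous_of_laplacian_eq_zero
    (hL : ∀ m r, L (X m * r) = c * L (pderiv m r)) (hL1 : L 1 = 1)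
    {p q : MvPolynomial σ K} {i j : ℕ} (hp : p.IsHomogeneous i) (hq : q.IsHomogeneous j)
    (hΔp : laplacian p = 0) (hΔq : laplacian q = 0) :
    L (p * q) = if i = j then c ^ i * fischer p q else 0 := by
  induction i generalizing j p q with
  | zero =>
    rcases j with _ | j
    · rw [← totalDegree_zero_iff_isHomogeneous, totalDegree_eq_zero_iff_eq_C] at hp hq
      rw [hp, hq, fischer_C_C, ← C_mul, ← mul_one (C _), ← smul_eq_C_mul, map_smul, hL1]
      simp
    · rw [mul_comm, apply_mul_eq_zero_of_isHomogeneous_zero hL hq j.succ_ne_zero hΔq hp]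
      simp
  | succ i ih =>
    rcases j with _ | j
    · rw [apply_mul_eq_zero_of_isHomogeneous_zero hL hp i.succ_ne_zero hΔp hq]
      simp
    have hpm (m : σ) : L (pderiv m p * pderiv m q) =
        if i = j then c ^ i * fischer (pderiv m p) (pderiv m q) else 0 :=
      ih hp.pderiv hq.pderiv (by rw [laplacian_pderiv, hΔp, map_zero])
        (by rw [laplacian_pderiv, hΔq, map_zero])
    have h := natCast_mul_apply_mul_eq_sum_pderiv hL hp hΔp q
    have hi : (i : K) + 1 ≠ 0 := Nat.cast_add_one_ne_zero i
    simp only [hpm, Nat.add_right_cancel_iff, Nat.cast_add_one] at h ⊢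
    split_ifs at h ⊢ with hij
    · rw [← mul_sum, sum_fischer_pderiv hp] at h
      rw [pow_succ]
      refine mul_left_cancel₀ hi (h.trans ?_)
      push_cast
      ring
    · simpa [hi] using h

theorem apply_sum_mul_sum_of_laplacian_eq_zero
    (hL : ∀ m r, L (X m * r) = c * L (pderiv m r)) (hL1 : L 1 = 1) {κ : Type*}
    (P : κ → ℕ → MvPolynomial σ K) (hP : ∀ k i, (P k i).IsHomogeneous i)
    (hΔ : ∀ k i, laplacian (P k i) = 0) (A : Finset κ) (I : Finset ℕ) :
    L ((∑ k ∈ A, ∑ i ∈ I, P k i) * ∑ j ∈ A, ∑ i ∈ I, P j i) =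
      ∑ k ∈ A, ∑ j ∈ A, ∑ i ∈ I, c ^ i * fischer (P k i) (P j i) := by
  simp only [sum_mul_sum, map_sum, sum_ite_eq,
    apply_mul_of_isHomogeneous_of_laplacian_eq_zero hL hL1 (hP _ _) (hP _ _) (hΔ _ _) (hΔ _ _)]
  exact sum_congr rfl fun _ _ => sum_congr rfl fun _ _ => sum_congr rfl fun _ hi => if_pos hi

end GaussianRule

end MvPolynomial

def gaussDensity (β t : ℝ) : ℝ := (π * β) ^ (-(1 : ℝ) / 2) * exp (-t ^ 2 / β)

def gaussMoment (β : ℝ) (t : ℕ) : ℝ := ∫ v, gaussDensity β v * v ^ t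

section GaussMoment

variable {β : ℝ}

@[fun_prop]
theorem continuous_gaussDensity (β : ℝ) : Continuous (gaussDensity β) := by
  unfold gaussDensity
  fun_prop

theorem gaussDensity_pos (hβ : 0 < β) (t : ℝ) : 0 < gaussDensity β t := by
  unfold gaussDensity
  positivity

theorem gaussDensity_eq (β t : ℝ) :
    gaussDensity β t = (π * β) ^ (-(1 : ℝ) / 2) * exp (-β⁻¹ * t ^ 2) := by
  unfold gaussDensity
  ring_nf

theorem hasDerivAt_gaussDensity (β t : ℝ) :
    HasDerivAt (gaussDensity β) (-(2 / β) * t * gaussDensity β t) t := by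
  refine ((((hasDerivAt_pow 2 t).fun_neg.div_const β).exp).const_mul
    ((π * β) ^ (-(1 : ℝ) / 2))).congr_deriv ?_
  simp only [gaussDensity]
  ring

theorem integrable_gaussDensity_mul_pow (hβ : 0 < β) (t : ℕ) :
    Integrable fun v => gaussDensity β v * v ^ t := by
  have h := (integrable_rpow_mul_exp_neg_mul_sq (inv_pos.2 hβ)
    (by linarith [t.cast_nonneg (α := ℝ)] : (-1 : ℝ) < t)).const_mul ((π * β) ^ (-(1 : ℝ) / 2))
  refine h.congr (ae_of_all _ fun v => ?_)
  simp only [gaussDensity_eq, rpow_natCast]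
  ring

theorem gaussMoment_zero (hβ : 0 < β) : gaussMoment β 0 = 1 := by
  simp only [gaussMoment, pow_zero, mul_one, gaussDensity_eq]
  rw [integral_const_mul, integral_gaussian, div_inv_eq_mul, sqrt_eq_rpow,
    ← rpow_add (by positivity)]
  norm_num

-- At `t = 0` both sides vanish, so the truncated `t - 1` is harmless.
theorem gaussMoment_succ (hβ : 0 < β) (t : ℕ) :
    gaussMoment β (t + 1) = β / 2 * t * gaussMoment β (t - 1) := by
  have hderiv (v : ℝ) : HasDerivAt (fun v => gaussDensity β v * v ^ t)
      (t * (gaussDensity β v * v ^ (t - 1)) - 2 / β * (gaussDensity β v * v ^ (t + 1))) v := by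
    refine ((hasDerivAt_gaussDensity β v).fun_mul (hasDerivAt_pow t v)).congr_deriv ?_
    rcases t with _ | t
    · simp only [CharP.cast_eq_zero, zero_mul, zero_add, pow_zero, mul_one]
      ring
    · simp only [Nat.add_sub_cancel]
      ring
  have hint (s : ℕ) (a : ℝ) : Integrable fun v => a * (gaussDensity β v * v ^ s) :=
    (integrable_gaussDensity_mul_pow hβ s).const_mul a
  have h := integral_eq_zero_of_hasDerivAt_of_integrable hderiv ((hint _ _).sub (hint _ _))
    (integrable_gaussDensity_mul_pow hβ t)
  rw [integral_sub (hint _ _) (hint _ _), integral_const_mul, integral_const_mul,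
    sub_eq_zero] at h
  rw [gaussMoment, gaussMoment]
  field_simp at h ⊢
  linarith

end GaussMoment

section EuclideanProduct

variable {ι : Type*} [Fintype ι]

theorem integral_euclideanSpace_prod (f : ι → ℝ → ℝ) :
    ∫ x : EuclideanSpace ℝ ι, ∏ i, f i (x i) = ∏ i, ∫ t, f i t := by
  rw [← ((EuclideanSpace.volume_preserving_symm_measurableEquiv_toLp ι).symm).integral_comp',
    volume_pi, ← integral_fintype_prod_eq_prod]
  rfl

theorem integrable_euclideanSpace_prod {f : ι → ℝ → ℝ} (hf : ∀ i, Integrable (f i)) :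
    Integrable fun x : EuclideanSpace ℝ ι => ∏ i, f i (x i) :=
  ((EuclideanSpace.volume_preserving_symm_measurableEquiv_toLp ι).integrable_comp_emb
    (MeasurableEquiv.measurableEmbedding _)).2 (Integrable.fintype_prod hf)

end EuclideanProduct

section GaussMeasure

variable {n : ℕ} {β : ℝ}

theorem gaussMeasure_eq_withDensity_prod (hβ : 0 < β) :
    gaussMeasure n β =
      volume.withDensity fun x => ENNReal.ofReal (∏ m, gaussDensity β (x m)) := by
  unfold gaussMeasure
  congr with x : 1
  congr 1
  have hn : (π * β) ^ (-(n : ℝ) / 2) = ∏ _m : Fin n, (π * β) ^ (-(1 : ℝ) / 2) := by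
    rw [prod_const, card_univ, Fintype.card_fin, ← rpow_mul_natCast (by positivity)]
    ring_nf
  rw [hn, EuclideanSpace.norm_sq_eq, ← sum_neg_distrib, sum_div, exp_sum, ← prod_mul_distrib]
  simp [gaussDensity]

theorem integral_gaussMeasure (hβ : 0 < β) (f : EuclideanSpace ℝ (Fin n) → ℝ) :
    ∫ x, f x ∂gaussMeasure n β = ∫ x, (∏ m, gaussDensity β (x m)) * f x := by
  rw [gaussMeasure_eq_withDensity_prod hβ, integral_withDensity_eq_integral_toReal_smul
    (by fun_prop) (ae_of_all _ fun _ => ENNReal.ofReal_lt_top)]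
  simp only [ENNReal.toReal_ofReal (prod_nonneg fun _ _ => (gaussDensity_pos hβ _).le),
    smul_eq_mul]

theorem integrable_gaussMeasure_iff (hβ : 0 < β) {f : EuclideanSpace ℝ (Fin n) → ℝ} :
    Integrable f (gaussMeasure n β) ↔
      Integrable fun x => (∏ m, gaussDensity β (x m)) * f x := by
  rw [gaussMeasure_eq_withDensity_prod hβ, integrable_withDensity_iff_integrable_smul'
    (by fun_prop) (ae_of_all _ fun _ => ENNReal.ofReal_lt_top)]
  simp only [ENNReal.toReal_ofReal (prod_nonneg fun _ _ => (gaussDensity_pos hβ _).le),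
    smul_eq_mul]

theorem integral_prod_pow_gaussMeasure (hβ : 0 < β) (u : Fin n → ℕ) :
    ∫ x, ∏ m, x m ^ u m ∂gaussMeasure n β = ∏ m, gaussMoment β (u m) := by
  simp only [integral_gaussMeasure hβ, ← prod_mul_distrib]
  exact integral_euclideanSpace_prod fun m v => gaussDensity β v * v ^ u m

theorem integrable_prod_pow_gaussMeasure (hβ : 0 < β) (u : Fin n → ℕ) :
    Integrable (fun x => ∏ m, x m ^ u m) (gaussMeasure n β) := by
  simp only [integrable_gaussMeasure_iff hβ, ← prod_mul_distrib]
  exact integrable_euclideanSpace_prod fun m => integrable_gaussDensity_mul_pow hβ (u m)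

end GaussMeasure

section GaussFunctional

variable {ι : Type*} [Fintype ι] {β : ℝ}

/-- `p ↦ ∫ p dμ_β`, defined on monomials through the moments so that it is linear by
construction. -/
def gaussFunctional (ι : Type*) [Fintype ι] (β : ℝ) : MvPolynomial ι ℝ →ₗ[ℝ] ℝ :=
  (basisMonomials ι ℝ).constr ℝ fun u => ∏ m, gaussMoment β (u m)

theorem gaussFunctional_monomial (u : ι →₀ ℕ) (a : ℝ) :
    gaussFunctional ι β (monomial u a) = a * ∏ m, gaussMoment β (u m) := by
  rw [show monomial u a = a • basisMonomials ι ℝ u by simp [smul_monomial], map_smul,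
    gaussFunctional, Module.Basis.constr_basis, smul_eq_mul]

theorem gaussFunctional_one (hβ : 0 < β) : gaussFunctional ι β 1 = 1 := by
  rw [← C_1, C_apply, gaussFunctional_monomial]
  simp [gaussMoment_zero hβ]

theorem gaussFunctional_X_mul (hβ : 0 < β) (m : ι) (r : MvPolynomial ι ℝ) :
    gaussFunctional ι β (X m * r) = β / 2 * gaussFunctional ι β (pderiv m r) := by
  classical
  induction r using MvPolynomial.induction_on' with
  | add p q hp hq => rw [mul_add, map_add, map_add, map_add, hp, hq, mul_add]
  | monomial u a =>
    rw [← pow_one (X m), ← monomial_single_add, pderiv_monomial, gaussFunctional_monomial,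
      gaussFunctional_monomial, add_comm, Finsupp.prod_apply_add_single,
      Finsupp.prod_apply_tsub_single, gaussMoment_succ hβ]
    ring

theorem integral_eval_gaussMeasure {n : ℕ} (hβ : 0 < β) (p : MvPolynomial (Fin n) ℝ) :
    ∫ x, eval x p ∂gaussMeasure n β = gaussFunctional (Fin n) β p := by
  conv_lhs => rw [p.as_sum]
  conv_rhs => rw [p.as_sum]
  simp only [map_sum, eval_monomial, Finsupp.prod_pow, gaussFunctional_monomial]
  refine (integral_finsetSum _ fun u _ => ?_).trans ?_
  · exact (integrable_prod_pow_gaussMeasure hβ u).const_mul _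
  simp only [integral_const_mul, integral_prod_pow_gaussMeasure hβ]

end GaussFunctional

section Harmonic

variable {ι : Type*} [Fintype ι]

theorem hasFDerivAt_eval (p : MvPolynomial ι ℝ) (x : EuclideanSpace ℝ ι) :
    HasFDerivAt (fun y : EuclideanSpace ℝ ι => eval y p)
      (∑ m, eval x (pderiv m p) • EuclideanSpace.proj (𝕜 := ℝ) m) x := by
  classical
  induction p using MvPolynomial.induction_on with
  | C a => simpa using hasFDerivAt_const a x
  | add p q hp hq => simpa [add_smul, sum_add_distrib] using hp.fun_add hq
  | mul_X p j hp =>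
    simp only [map_mul, eval_X]
    refine (hp.fun_mul (EuclideanSpace.proj (𝕜 := ℝ) j).hasFDerivAt).congr_fderiv ?_
    ext v
    simp [pderiv_X, Pi.single_apply, apply_ite, add_mul, sum_add_distrib, mul_sum, mul_assoc]

theorem fderiv_eval_apply_single [DecidableEq ι] (p : MvPolynomial ι ℝ)
    (x : EuclideanSpace ℝ ι) (i : ι) :
    fderiv ℝ (fun y : EuclideanSpace ℝ ι => eval y p) x (EuclideanSpace.single i 1) =
      eval x (pderiv i p) := by
  simp [(hasFDerivAt_eval p x).fderiv]

theorem laplacian_eq_zero_of_isHarmonic {n : ℕ} {p : MvPolynomial (Fin n) ℝ}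
    (h : IsHarmonic fun x : EuclideanSpace ℝ (Fin n) => eval x p) : laplacian p = 0 := by
  have hsecond (x : EuclideanSpace ℝ (Fin n)) (i : Fin n) :
      iteratedFDeriv ℝ 2 (fun y : EuclideanSpace ℝ (Fin n) => eval y p) x
        ![EuclideanSpace.single i 1, EuclideanSpace.single i 1] =
          eval x (pderiv i (pderiv i p)) := by
    have hdiff : DifferentiableAt ℝ (fderiv ℝ fun y : EuclideanSpace ℝ (Fin n) => eval y p) x :=
      (h.1.fderiv_right (m := 1) le_top).differentiable one_ne_zero x
    have hline : (fun y : EuclideanSpace ℝ (Fin n) =>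
        fderiv ℝ (fun z : EuclideanSpace ℝ (Fin n) => eval z p) y (EuclideanSpace.single i 1)) =
          fun y : EuclideanSpace ℝ (Fin n) => eval y (pderiv i p) := by
      funext y
      exact fderiv_eval_apply_single p y i
    rw [iteratedFDeriv_two_apply, Matrix.cons_val_zero, Matrix.cons_val_one,
      ← fderiv_eval_apply_single (pderiv i p) x i, ← hline,
      fderiv_clm_apply hdiff (differentiableAt_const _)]
    simp
  refine MvPolynomial.funext fun y => ?_
  simpa [laplacian, hsecond] using h.2 (WithLp.toLp 2 y)

end Harmonic

def homogeneousOfCoeffs (n i : ℕ) (b : (Fin n → ℕ) → ℝ) : MvPolynomial (Fin n) ℝ :=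
  ∑ s ∈ Finset.Nat.antidiagonalTuple n i, monomial (Finsupp.equivFunOnFinite.symm s) (b s)

section HomogeneousOfCoeffs

variable {n i : ℕ}

theorem eval_homogeneousOfCoeffs (b : (Fin n → ℕ) → ℝ) (x : Fin n → ℝ) :
    eval x (homogeneousOfCoeffs n i b) =
      ∑ s ∈ Finset.Nat.antidiagonalTuple n i, b s * ∏ m, x m ^ s m := by
  simp [homogeneousOfCoeffs, eval_monomial, Finsupp.prod_pow]

theorem coeff_homogeneousOfCoeffs (b : (Fin n → ℕ) → ℝ) {s : Fin n → ℕ}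
    (hs : s ∈ Finset.Nat.antidiagonalTuple n i) :
    coeff (Finsupp.equivFunOnFinite.symm s) (homogeneousOfCoeffs n i b) = b s := by
  simp [homogeneousOfCoeffs, coeff_sum, coeff_monomial, hs]

theorem support_homogeneousOfCoeffs_subset (b : (Fin n → ℕ) → ℝ) :
    (homogeneousOfCoeffs n i b).support ⊆
      (Finset.Nat.antidiagonalTuple n i).map Finsupp.equivFunOnFinite.symm.toEmbedding := by
  classical
  refine MvPolynomial.support_sum.trans (biUnion_subset.2 fun s hs => ?_)
  refine support_monomial_subset.trans ?_
  simpa using hs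

theorem isHomogeneous_homogeneousOfCoeffs (b : (Fin n → ℕ) → ℝ) :
    (homogeneousOfCoeffs n i b).IsHomogeneous i :=
  IsHomogeneous.sum _ _ _ fun s hs => isHomogeneous_monomial _ <| by
    rw [Finsupp.degree_eq_sum]
    simpa using Finset.Nat.mem_antidiagonalTuple.1 hs

theorem fischer_homogeneousOfCoeffs (b b' : (Fin n → ℕ) → ℝ) :
    fischer (homogeneousOfCoeffs n i b) (homogeneousOfCoeffs n i b') =
      ∑ s ∈ Finset.Nat.antidiagonalTuple n i, b s * b' s * ∏ m, ((s m).factorial : ℝ) := by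
  rw [fischer_eq_sum_of_support_subset (support_homogeneousOfCoeffs_subset b), sum_map]
  refine sum_congr rfl fun s hs => ?_
  simp [coeff_homogeneousOfCoeffs _ hs]

end HomogeneousOfCoeffs

theorem stmt18_general (n : ℕ) (β : ℝ) (hβ : 0 < β) (M : ℕ)
    (a : ℕ → (Fin n → ℕ) → ℝ)
    (hdeg : ∀ k s, k < ∑ m, s m → a k s = 0)
    (hharm : ∀ k i, IsHarmonic (fun x : EuclideanSpace ℝ (Fin n) =>
      ∑ s ∈ Finset.Nat.antidiagonalTuple n i, a k s * ∏ m, (x m) ^ (s m))) :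
    ∫ x, (∑ k ∈ Finset.range (M + 1), ∑ i ∈ Finset.range (k + 1),
          ∑ s ∈ Finset.Nat.antidiagonalTuple n i, a k s * ∏ m, (x m) ^ (s m)) ^ 2
        ∂(gaussMeasure n β) =
      ∑ k ∈ Finset.range (M + 1), ∑ j ∈ Finset.range (M + 1), ∑ i ∈ Finset.range (M + 1),
        β ^ i / 2 ^ i *
          ∑ s ∈ Finset.Nat.antidiagonalTuple n i,
            a k s * a j s * ∏ m, ((s m).factorial : ℝ) := by
  have hvanish {k i : ℕ} (hki : k < i) : homogeneousOfCoeffs n i (a k) = 0 :=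
    sum_eq_zero fun s hs => by
      rw [hdeg k s (by rwa [Finset.Nat.mem_antidiagonalTuple.1 hs]), monomial_zero]
  have hsq (x : EuclideanSpace ℝ (Fin n)) :
      (∑ k ∈ range (M + 1), ∑ i ∈ range (k + 1),
        ∑ s ∈ Finset.Nat.antidiagonalTuple n i, a k s * ∏ m, (x m) ^ (s m)) ^ 2 =
        eval x ((∑ k ∈ range (M + 1), ∑ i ∈ range (M + 1), homogeneousOfCoeffs n i (a k)) *
          ∑ j ∈ range (M + 1), ∑ i ∈ range (M + 1), homogeneousOfCoeffs n i (a j)) := by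
    rw [map_mul, ← sq, map_sum]
    refine congrArg (· ^ 2) (sum_congr rfl fun k hk => ?_)
    rw [← sum_subset (range_subset_range.2 (by simp at hk; omega : k + 1 ≤ M + 1))
      fun i _ hi => hvanish (by simp at hi; omega)]
    simp only [map_sum, eval_homogeneousOfCoeffs]
  simp_rw [hsq, integral_eval_gaussMeasure hβ]
  rw [apply_sum_mul_sum_of_laplacian_eq_zero (gaussFunctional_X_mul hβ) (gaussFunctional_one hβ)
    (fun k i => homogeneousOfCoeffs n i (a k)) (fun k i => isHomogeneous_homogeneousOfCoeffs _)
    fun k i => laplacian_eq_zero_of_isHarmonic <| by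
      simpa [eval_homogeneousOfCoeffs] using hharm k i]
  simp only [fischer_homogeneousOfCoeffs, div_pow]

/-- For harmonic homogeneous components `ψ_k^i(x) = ∑_{|s|=i} a_s^k x^s`,
`‖∑ₖ∑ᵢ ψ_k^i‖²_{L²(ℝⁿ,dμ_β)} = ∑_{k,j} ∑ᵢ (β/2)^i ∑_{|s|=i} a_s^k a_s^j s!`. -/
theorem stmt18 (n : ℕ) (hn : 2 ≤ n) (β : ℝ) (hβ : 0 < β) (M : ℕ)
    (a : ℕ → (Fin n → ℕ) → ℝ)
    (hdeg : ∀ k s, k < ∑ m, s m → a k s = 0)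
    (hharm : ∀ k i, IsHarmonic (fun x : EuclideanSpace ℝ (Fin n) =>
      ∑ s ∈ Finset.Nat.antidiagonalTuple n i, a k s * ∏ m, (x m) ^ (s m))) :
    ∫ x, (∑ k ∈ Finset.range (M + 1), ∑ i ∈ Finset.range (k + 1),
          ∑ s ∈ Finset.Nat.antidiagonalTuple n i, a k s * ∏ m, (x m) ^ (s m)) ^ 2
        ∂(gaussMeasure n β) =
      ∑ k ∈ Finset.range (M + 1), ∑ j ∈ Finset.range (M + 1), ∑ i ∈ Finset.range (M + 1),
        β ^ i / 2 ^ i *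
          ∑ s ∈ Finset.Nat.antidiagonalTuple n i,
            a k s * a j s * ∏ m, ((s m).factorial : ℝ) :=
  stmt18_general n β hβ M a hdeg hharm

end
end
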